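/- arXiv:2006.16015 — 5 statements merged into one kernel-verified Lean document; each statement's English description precedes it below -/
import Mathlib

section
/- For any nonnegative real-valued random variable X with E[X] > 0 and finite second moment, and with b := E[X²]/E[X]² < ∞, it holds that log(E[X]) ≤ min over a > b of ( a·E[log(1 + aX)] / (1 − √(b/a)) − log(a) ). -/
open MeasureTheory ProbabilityTheory Real

/-! The concave function `log (1 + a x)` lies above the quadratic `log (1 + a c) (x / c - x² / c²)`
on `x ≥ 0` (the chord of the concave function on `[0, c]`, and `0` beyond `c`). Integrating this
bound with `c = 2 E[X²] / E[X]`, the value maximising the right-hand side, gives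
`E[log (1 + a X)] ≥ log (1 + a c) / (4 b)`, while `log (a E[X]) ≤ log (1 + a c)` because
`c ≥ 2 E[X]` as `E[X²] ≥ E[X]²`. The theorem then reduces to `1 - √(b / a) ≤ a / (4 b)`, i.e.
`4 θ² (1 - θ) ≤ 1` for `θ > 0`. -/

lemma sq_integral_le_integral_sq {Ω : Type*} [MeasurableSpace Ω] {μ : Measure Ω}
    [IsProbabilityMeasure μ] {X : Ω → ℝ} (hX : MemLp X 2 μ) :
    (∫ ω, X ω ∂μ) ^ 2 ≤ ∫ ω, X ω ^ 2 ∂μ := by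
  have h := variance_nonneg X μ
  rw [variance_eq_sub hX, sub_nonneg] at h
  simpa using h

lemma sub_sq_mul_log_one_add_le_log_one_add_mul {y t : ℝ} (hy : 0 ≤ y) (ht : 0 ≤ t) :
    (t - t ^ 2) * log (1 + y) ≤ log (1 + t * y) := by
  have hlog : 0 ≤ log (1 + y) := log_nonneg (by linarith)
  rcases le_total t 1 with ht1 | ht1
  · have hconcave : t * log (1 + y) ≤ log (1 + t * y) := by
      rw [← log_rpow (by linarith)]
      exact log_le_log (by positivity) (rpow_one_add_le_one_add_mul_self (by linarith) ht ht1)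
    nlinarith
  · calc (t - t ^ 2) * log (1 + y) ≤ 0 := mul_nonpos_of_nonpos_of_nonneg (by nlinarith) hlog
      _ ≤ log (1 + t * y) := log_nonneg (by nlinarith)

lemma log_one_add_mul_mul_moments_le_integral_log {Ω : Type*} [MeasurableSpace Ω]
    {μ : Measure Ω} {X : Ω → ℝ} (hXnn : 0 ≤ᵐ[μ] X) (hX1 : Integrable X μ)
    (hX2 : Integrable (fun ω => X ω ^ 2) μ) {a c : ℝ} (ha : 0 ≤ a) (hc : 0 < c)
    (hlog : Integrable (fun ω => log (1 + a * X ω)) μ) :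
    log (1 + a * c) * ((∫ ω, X ω ∂μ) / c - (∫ ω, X ω ^ 2 ∂μ) / c ^ 2)
      ≤ ∫ ω, log (1 + a * X ω) ∂μ := by
  have hquad : Integrable (fun ω => log (1 + a * c) * (X ω / c - X ω ^ 2 / c ^ 2)) μ :=
    ((hX1.div_const c).sub (hX2.div_const (c ^ 2))).const_mul _
  calc log (1 + a * c) * ((∫ ω, X ω ∂μ) / c - (∫ ω, X ω ^ 2 ∂μ) / c ^ 2)
      = ∫ ω, log (1 + a * c) * (X ω / c - X ω ^ 2 / c ^ 2) ∂μ := by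
        rw [integral_const_mul, integral_sub (hX1.div_const c) (hX2.div_const (c ^ 2)),
          integral_div, integral_div]
    _ ≤ ∫ ω, log (1 + a * X ω) ∂μ := by
        refine integral_mono_ae hquad hlog (hXnn.mono fun ω hω => ?_)
        calc log (1 + a * c) * (X ω / c - X ω ^ 2 / c ^ 2)
            = (X ω / c - (X ω / c) ^ 2) * log (1 + a * c) := by ring
          _ ≤ log (1 + X ω / c * (a * c)) :=
            sub_sq_mul_log_one_add_le_log_one_add_mul (mul_nonneg ha hc.le) (div_nonneg hω hc.le)
          _ = log (1 + a * X ω) := by field_simp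

lemma one_sub_sqrt_le_inv_four_mul {x : ℝ} (hx : 0 < x) : 1 - √x ≤ (4 * x)⁻¹ := by
  obtain ⟨θ, hθ, rfl⟩ : ∃ θ, 0 < θ ∧ x = θ ^ 2 := ⟨√x, sqrt_pos.2 hx, (sq_sqrt hx.le).symm⟩
  rw [sqrt_sq hθ.le, ← one_div, le_div_iff₀ (by positivity)]
  nlinarith [mul_nonneg (sq_nonneg (θ - 2 / 3)) (by positivity : (0 : ℝ) ≤ θ + 1 / 3)]

theorem reverse_jensen_general {Ω : Type*} [MeasurableSpace Ω] (μ : Measure Ω)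
    [IsProbabilityMeasure μ] (X : Ω → ℝ) (hXnn : ∀ ω, 0 ≤ X ω)
    (hX1 : Integrable X μ) (hX2 : Integrable (fun ω => X ω ^ 2) μ)
    (hpos : 0 < ∫ ω, X ω ∂μ) (b : ℝ)
    (hb : b = (∫ ω, X ω ^ 2 ∂μ) / (∫ ω, X ω ∂μ) ^ 2) :
    ∀ a : ℝ, b < a → Integrable (fun ω => Real.log (1 + a * X ω)) μ →
      Real.log (∫ ω, X ω ∂μ)
        ≤ a * (∫ ω, Real.log (1 + a * X ω) ∂μ) / (1 - Real.sqrt (b / a))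
          - Real.log a := by
  intro a hba hlog
  set m := ∫ ω, X ω ∂μ
  set s := ∫ ω, X ω ^ 2 ∂μ
  have hms : m ^ 2 ≤ s :=
    sq_integral_le_integral_sq ((memLp_two_iff_integrable_sq hX1.aestronglyMeasurable).2 hX2)
  have hs : 0 < s := (pow_pos hpos 2).trans_le hms
  have hb0 : 0 < b := by rw [hb]; positivity
  have ha : 0 < a := hb0.trans hba
  have hθ : 0 < 1 - √(b / a) := sub_pos.2 ((sqrt_lt' one_pos).2 (by rwa [one_pow, div_lt_one ha]))
  set c := 2 * s / m
  have hmc : 2 * m ≤ c := by rw [le_div_iff₀ hpos]; nlinarith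
  have hkey : (1 - √(b / a)) * log (a * m) ≤ a * ∫ ω, log (1 + a * X ω) ∂μ :=
    calc (1 - √(b / a)) * log (a * m) ≤ (1 - √(b / a)) * log (1 + a * c) :=
          mul_le_mul_of_nonneg_left (log_le_log (by positivity) (by nlinarith)) hθ.le
      _ ≤ (4 * (b / a))⁻¹ * log (1 + a * c) :=
          mul_le_mul_of_nonneg_right (one_sub_sqrt_le_inv_four_mul (div_pos hb0 ha))
            (log_nonneg (by nlinarith))
      _ = a * (log (1 + a * c) * (m / c - s / c ^ 2)) := by
          simp only [c]; rw [hb]; field_simp; ring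
      _ ≤ a * ∫ ω, log (1 + a * X ω) ∂μ :=
          mul_le_mul_of_nonneg_left (log_one_add_mul_mul_moments_le_integral_log
            (ae_of_all _ hXnn) hX1 hX2 ha.le (by linarith) hlog) ha.le
  rw [log_mul ha.ne' hpos.ne'] at hkey
  rw [le_sub_iff_add_le, le_div_iff₀ hθ]
  linarith

/-- Reverse Jensen inequality: for a nonnegative random variable `X` with `E[X] > 0`
and finite second moment, with `b = E[X²]/E[X]²`, for every `a > b` we have
`log (E[X]) ≤ a * E[log (1 + a X)] / (1 - √(b/a)) - log a`. -/
theorem reverse_jensen {Ω : Type*} [MeasurableSpace Ω] (μ : Measure Ω)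
    [IsProbabilityMeasure μ] (X : Ω → ℝ) (hXnn : ∀ ω, 0 ≤ X ω) (hXm : Measurable X)
    (hX1 : Integrable X μ) (hX2 : Integrable (fun ω => X ω ^ 2) μ)
    (hpos : 0 < ∫ ω, X ω ∂μ) (b : ℝ)
    (hb : b = (∫ ω, X ω ^ 2 ∂μ) / (∫ ω, X ω ∂μ) ^ 2) :
    ∀ a : ℝ, b < a → Integrable (fun ω => Real.log (1 + a * X ω)) μ →
      Real.log (∫ ω, X ω ∂μ)
        ≤ a * (∫ ω, Real.log (1 + a * X ω) ∂μ) / (1 - Real.sqrt (b / a))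
          - Real.log a :=
  reverse_jensen_general μ X hXnn hX1 hX2 hpos b hb
end

section
/- Let P and Q be probability measures with P absolutely continuous with respect to Q, and let f be a bounded measurable function. Then E_P[f] − log E_Q[e^f] ≤ D_KL(P‖Q) (Donsker-Varadhan lower bound). -/
/-!
Tilt `Q` by `f`: the measure `Q_f` with density `e^f / E_Q[e^f]` satisfies
`log (dP/dQ_f) = log (dP/dQ) - f + log E_Q[e^f]`, so integrating against `P` gives
`D_KL(P‖Q_f) = D_KL(P‖Q) - E_P[f] + log E_Q[e^f]`, and Gibbs' inequality `D_KL(P‖Q_f) ≥ 0`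
is the claim.
-/

open MeasureTheory Real

theorem integral_sub_log_integral_exp_le_integral_llr {α : Type*} {mα : MeasurableSpace α}
    {μ ν : Measure α} [IsProbabilityMeasure μ] [SigmaFinite ν] {f : α → ℝ}
    (hμν : μ ≪ ν) (h_int : Integrable (llr μ ν) μ) (hfμ : Integrable f μ)
    (hfν : Integrable (fun x ↦ exp (f x)) ν) :
    ∫ x, f x ∂μ - log (∫ x, exp (f x) ∂ν) ≤ ∫ x, llr μ ν x ∂μ := by
  have hμν_tilted : μ ≪ ν.tilted f := hμν.trans (absolutelyContinuous_tilted hfν)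
  have gibbs := InformationTheory.integral_llr_add_sub_measure_univ_nonneg hμν_tilted
    (integrable_llr_tilted_right hμν hfμ h_int hfν)
  rw [integral_llr_tilted_right hμν hfμ hfν h_int, probReal_univ (μ := μ)] at gibbs
  linarith [measureReal_le_one (μ := ν.tilted f) (s := Set.univ)]

/-- Donsker–Varadhan lower bound: `E_P[f] - log E_Q[e^f] ≤ D_KL(P‖Q)`. -/
theorem donsker_varadhan_bound {α : Type*} [MeasurableSpace α]
    (P Q : Measure α) [IsProbabilityMeasure P] [IsProbabilityMeasure Q]
    (hPQ : P ≪ Q) (f : α → ℝ) (hf : Measurable f) (C : ℝ) (hC : ∀ x, |f x| ≤ C)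
    (hkl : Integrable (fun x => Real.log ((P.rnDeriv Q x).toReal)) P) :
    (∫ x, f x ∂P) - Real.log (∫ x, Real.exp (f x) ∂Q)
      ≤ ∫ x, Real.log ((P.rnDeriv Q x).toReal) ∂P := by
  have hfP : Integrable f P :=
    .of_bound hf.aestronglyMeasurable C (.of_forall hC)
  have hexpQ : Integrable (fun x ↦ exp (f x)) Q := by
    refine .of_bound hf.exp.aestronglyMeasurable (exp C) (.of_forall fun x ↦ ?_)
    rw [norm_of_nonneg (exp_pos _).le]
    exact exp_le_exp.mpr (abs_le.mp (hC x)).2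
  exact integral_sub_log_integral_exp_le_integral_llr hPQ hkl hfP hexpQ
end

section
/- Let P and Q be probability measures with P ≪ Q and finite KL divergence, and let f be a bounded measurable function. Then E_P[f] − e^{-1}·E_Q[e^f] ≤ D_KL(P‖Q) (NWJ/Nguyen-Wainwright-Jordan lower bound). -/
/-!
Pointwise, `t u - e⁻¹ eᵘ ≤ t log t` for `t ≥ 0` (Fenchel–Young for `t ↦ t log t`, whose convex
conjugate is `u ↦ e^{u-1}`). Taking `t = dP/dQ`, `u = f` and integrating against `Q` turns the
left side into `E_P[f] - e⁻¹ E_Q[e^f]` and the right side into `E_P[log dP/dQ]`.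
-/

open MeasureTheory Real

lemma mul_sub_inv_exp_one_mul_exp_le_mul_log {t : ℝ} (ht : 0 ≤ t) (u : ℝ) :
    t * u - (exp 1)⁻¹ * exp u ≤ t * log t := by
  rcases ht.eq_or_lt with rfl | ht
  · simp only [zero_mul, zero_sub, neg_nonpos]
    positivity
  · have h_conj : t * exp (u - log t - 1) = (exp 1)⁻¹ * exp u := by
      rw [exp_sub, exp_sub, exp_log ht]
      field_simp
    calc t * u - (exp 1)⁻¹ * exp u
        = t * log t + t * ((u - log t - 1) + 1 - exp (u - log t - 1)) := by
          rw [← h_conj]; ring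
      _ ≤ t * log t := by
          have := add_one_le_exp (u - log t - 1)
          nlinarith

theorem integral_sub_inv_exp_one_mul_integral_exp_le_integral_log_rnDeriv
    {α : Type*} [MeasurableSpace α] {P Q : Measure α} [SigmaFinite P]
    [P.HaveLebesgueDecomposition Q] (hPQ : P ≪ Q) {f : α → ℝ}
    (hf : Integrable f P) (hexp : Integrable (fun x => exp (f x)) Q)
    (hkl : Integrable (fun x => log (P.rnDeriv Q x).toReal) P) :
    (∫ x, f x ∂P) - (exp 1)⁻¹ * (∫ x, exp (f x) ∂Q)
      ≤ ∫ x, log (P.rnDeriv Q x).toReal ∂P := by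
  have hf' := (integrable_rnDeriv_smul_iff hPQ).mpr hf
  have hkl' := (integrable_rnDeriv_smul_iff hPQ).mpr hkl
  rw [← integral_rnDeriv_smul hPQ, ← integral_rnDeriv_smul hPQ, ← integral_const_mul,
    ← integral_sub hf' (hexp.const_mul _)]
  exact integral_mono (hf'.sub (hexp.const_mul _)) hkl' fun x =>
    mul_sub_inv_exp_one_mul_exp_le_mul_log ENNReal.toReal_nonneg (f x)

/-- NWJ (Nguyen–Wainwright–Jordan) lower bound:
`E_P[f] - e⁻¹ E_Q[e^f] ≤ D_KL(P‖Q)`. -/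
theorem nwj_bound {α : Type*} [MeasurableSpace α]
    (P Q : Measure α) [IsProbabilityMeasure P] [IsProbabilityMeasure Q]
    (hPQ : P ≪ Q) (f : α → ℝ) (hf : Measurable f) (C : ℝ) (hC : ∀ x, |f x| ≤ C)
    (hkl : Integrable (fun x => Real.log ((P.rnDeriv Q x).toReal)) P) :
    (∫ x, f x ∂P) - (Real.exp 1)⁻¹ * (∫ x, Real.exp (f x) ∂Q)
      ≤ ∫ x, Real.log ((P.rnDeriv Q x).toReal) ∂P := by
  have hf_int : Integrable f P :=
    .of_bound hf.aestronglyMeasurable C (.of_forall hC)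
  have hexp_int : Integrable (fun x => exp (f x)) Q :=
    .of_bound hf.exp.aestronglyMeasurable (exp C) (.of_forall fun x => by
      rw [norm_of_nonneg (exp_pos _).le, exp_le_exp]
      exact (abs_le.mp (hC x)).2)
  exact integral_sub_inv_exp_one_mul_integral_exp_le_integral_log_rnDeriv hPQ hf_int hexp_int hkl
end

section
/- For a bounded measurable critic f and probability measures P ≪ Q, define the Gibbs probability measure G by dG = (e^f / E_Q[e^f]) dQ. Then E_P[log(dG/dQ)] = D_KL(P‖Q) − D_KL(P‖G), and in particular E_P[log(dG/dQ)] ≤ D_KL(P‖Q). -/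
/-!
The Gibbs measure is the exponential tilt `G = Q.tilted f`, whose density is
`dG/dQ = e^f / E_Q[e^f]`. Hence `E_P[log dG/dQ] = E_P[f] - log E_Q[e^f]`, while
`log dP/dG = log dP/dQ - f + log E_Q[e^f]` `P`-a.e. Integrating the latter against `P` gives
the identity, and the inequality is Gibbs' inequality `0 ≤ D_KL(P‖G)`.
-/

open MeasureTheory Real

namespace MeasureTheory

variable {α : Type*} [MeasurableSpace α] {μ ν : Measure α} {f : α → ℝ}

lemma integral_llr_nonneg [IsProbabilityMeasure μ] [IsProbabilityMeasure ν] (hμν : μ ≪ ν)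
    (h_int : Integrable (llr μ ν) μ) : 0 ≤ ∫ x, llr μ ν x ∂μ := by
  simpa using InformationTheory.integral_llr_add_sub_measure_univ_nonneg hμν h_int

lemma integral_log_rnDeriv_tilted_self [IsProbabilityMeasure μ] [SigmaFinite ν] (hμν : μ ≪ ν)
    (hfμ : Integrable f μ) (hfν : Integrable (fun x ↦ exp (f x)) ν) :
    ∫ x, log ((ν.tilted f).rnDeriv ν x).toReal ∂μ = ∫ x, f x ∂μ - log (∫ x, exp (f x) ∂ν) := by
  rw [integral_congr_ae (hμν.ae_le (log_rnDeriv_tilted_left_self hfν)),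
    integral_sub hfμ (integrable_const _)]
  simp

lemma integral_log_rnDeriv_tilted_self_eq_sub [IsProbabilityMeasure μ] [SigmaFinite ν]
    (hμν : μ ≪ ν) (hfμ : Integrable f μ) (hfν : Integrable (fun x ↦ exp (f x)) ν)
    (h_int : Integrable (llr μ ν) μ) :
    ∫ x, log ((ν.tilted f).rnDeriv ν x).toReal ∂μ
      = ∫ x, llr μ ν x ∂μ - ∫ x, llr μ (ν.tilted f) x ∂μ := by
  rw [integral_log_rnDeriv_tilted_self hμν hfμ hfν, integral_llr_tilted_right hμν hfμ hfν h_int]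
  ring

end MeasureTheory

/-- For the Gibbs probability measure `dG = (e^f / E_Q[e^f]) dQ`,
`E_P[log (dG/dQ)] = D_KL(P‖Q) - D_KL(P‖G)`, and so `E_P[log (dG/dQ)] ≤ D_KL(P‖Q)`. -/
theorem gibbs_measure_dv {α : Type*} [MeasurableSpace α]
    (P Q : Measure α) [IsProbabilityMeasure P] [IsProbabilityMeasure Q]
    (hPQ : P ≪ Q) (f : α → ℝ) (hf : Measurable f) (C : ℝ) (hC : ∀ x, |f x| ≤ C)
    (hkl : Integrable (fun x => Real.log ((P.rnDeriv Q x).toReal)) P)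
    (G : Measure α)
    (hG : G = Q.withDensity (fun x => ENNReal.ofReal (Real.exp (f x) / ∫ y, Real.exp (f y) ∂Q))) :
    (∫ x, Real.log ((G.rnDeriv Q x).toReal) ∂P)
        = (∫ x, Real.log ((P.rnDeriv Q x).toReal) ∂P)
          - (∫ x, Real.log ((P.rnDeriv G x).toReal) ∂P)
    ∧ (∫ x, Real.log ((G.rnDeriv Q x).toReal) ∂P)
        ≤ ∫ x, Real.log ((P.rnDeriv Q x).toReal) ∂P := by
  obtain rfl : G = Q.tilted f := hG
  have hfP : Integrable f P :=
    .of_bound hf.aestronglyMeasurable C (ae_of_all _ fun x ↦ (norm_eq_abs _).trans_le (hC x))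
  have hexpQ : Integrable (fun x ↦ exp (f x)) Q :=
    .of_bound hf.exp.aestronglyMeasurable (exp C) (ae_of_all _ fun x ↦ by
      simpa [abs_of_pos (exp_pos _)] using exp_le_exp.mpr (abs_le.mp (hC x)).2)
  have : IsProbabilityMeasure (Q.tilted f) := isProbabilityMeasure_tilted hexpQ
  have hPG : P ≪ Q.tilted f := hPQ.trans (absolutelyContinuous_tilted hexpQ)
  have h_eq := integral_log_rnDeriv_tilted_self_eq_sub hPQ hfP hexpQ hkl
  have h_gibbs := integral_llr_nonneg hPG (integrable_llr_tilted_right hPQ hfP hkl hexpQ)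
  exact ⟨h_eq, h_eq ▸ sub_le_self _ h_gibbs⟩
end

section
/- SMILE bias bound: for any measurable f and probability measure Q with G := E_Q[e^f] < ∞ and τ > 0, |E_Q[e^f] − E_Q[clip(e^f, e^{-τ}, e^{τ})]| ≤ max(e^{τ} − G·e^{-2τ}, G − e^{-τ}). -/
open MeasureTheory Real

/-! Clipping `e^f` to `[e^{-τ}, e^τ]` keeps its mean `m` in that interval, so `G - m` lies between
`G - e^τ` and `G - e^{-τ}`; the first bound is then weakened using `G e^{-2τ} ≤ G`. -/

theorem abs_sub_le_max_of_mem_Icc {α : Type*} [AddCommGroup α] [LinearOrder α]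
    [IsOrderedAddMonoid α] {a b c d : α} (hc : c ∈ Set.Icc a b) :
    |d - c| ≤ max (b - d) (d - a) :=
  abs_sub_le_iff.2
    ⟨le_max_of_le_right (sub_le_sub_left hc.1 d), le_max_of_le_left (sub_le_sub_right hc.2 d)⟩

theorem integral_max_min_mem_Icc {α : Type*} [MeasurableSpace α] {μ : Measure α}
    [IsProbabilityMeasure μ] {u : α → ℝ} (hu : AEMeasurable u μ) {a b : ℝ} (hab : a ≤ b) :
    ∫ x, max (min (u x) b) a ∂μ ∈ Set.Icc a b := by
  have hmem : ∀ x, max (min (u x) b) a ∈ Set.Icc a b :=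
    fun x => ⟨le_max_right _ _, max_le (min_le_right _ _) hab⟩
  have hint : Integrable (fun x => max (min (u x) b) a) μ :=
    Integrable.of_mem_Icc a b ((hu.min aemeasurable_const).max aemeasurable_const)
      (ae_of_all _ hmem)
  exact (convex_Icc a b).integral_mem isClosed_Icc (ae_of_all _ hmem) hint

theorem smile_bias_bound_general {α : Type*} [MeasurableSpace α]
    (Q : Measure α) [IsProbabilityMeasure Q] (f : α → ℝ)
    (hint : Integrable (fun x => Real.exp (f x)) Q)
    (τ : ℝ) (hτ : 0 < τ) (G : ℝ) (hG : G = ∫ x, Real.exp (f x) ∂Q) :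
    |(∫ x, Real.exp (f x) ∂Q)
        - ∫ x, max (min (Real.exp (f x)) (Real.exp τ)) (Real.exp (-τ)) ∂Q|
      ≤ max (Real.exp τ - G * Real.exp (-2 * τ)) (G - Real.exp (-τ)) := by
  have hclip := integral_max_min_mem_Icc hint.aemeasurable
    (Real.exp_le_exp.2 (by linarith : -τ ≤ τ))
  have hG_nonneg : 0 ≤ G := hG ▸ integral_nonneg fun x => (Real.exp_pos _).le
  have hdamp : G * Real.exp (-2 * τ) ≤ G :=
    mul_le_of_le_one_right hG_nonneg (Real.exp_le_one_iff.2 (by linarith))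
  rw [← hG]
  calc _ ≤ max (Real.exp τ - G) (G - Real.exp (-τ)) := abs_sub_le_max_of_mem_Icc hclip
    _ ≤ _ := max_le_max_right _ (by linarith)

/-- SMILE bias bound: `|E_Q[e^f] - E_Q[clip(e^f, e^{-τ}, e^{τ})]| ≤
max (e^τ - G e^{-2τ}) (G - e^{-τ})` where `G = E_Q[e^f]`. -/
theorem smile_bias_bound {α : Type*} [MeasurableSpace α]
    (Q : Measure α) [IsProbabilityMeasure Q] (f : α → ℝ) (hf : Measurable f)
    (hint : Integrable (fun x => Real.exp (f x)) Q)
    (τ : ℝ) (hτ : 0 < τ) (G : ℝ) (hG : G = ∫ x, Real.exp (f x) ∂Q) :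
    |(∫ x, Real.exp (f x) ∂Q)
        - ∫ x, max (min (Real.exp (f x)) (Real.exp τ)) (Real.exp (-τ)) ∂Q|
      ≤ max (Real.exp τ - G * Real.exp (-2 * τ)) (G - Real.exp (-τ)) :=
  smile_bias_bound_general Q f hint τ hτ G hG
end
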